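/- arXiv:math/0305402 — 5 statements merged into one kernel-verified Lean document; each statement's English description precedes it below -/
import Mathlib

section
/- Let C be an invertible hermitian complex matrix of size 2k×2k of block form C = [[0, B],[B^*, D]] where B is a k×k complex matrix, the top-left block is the k×k zero matrix, and D is a k×k hermitian matrix. Then the signature of C is zero. -/
open Matrix

open scoped InnerProductSpace ComplexConjugate

/-- The signature of a hermitian matrix: the number of positive eigenvalues
minus the number of negative eigenvalues. -/
noncomputable def hermSig {n : Type*} [Fintype n] [DecidableEq n] {A : Matrix n n ℂ}
    (hA : A.IsHermitian) : ℤ := by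
  classical
  exact ((Finset.univ.filter fun i => 0 < hA.eigenvalues i).card : ℤ) -
    ((Finset.univ.filter fun i => hA.eigenvalues i < 0).card : ℤ)

lemma aux_card_le {n : Type*} [Fintype n] [DecidableEq n] {A : Matrix n n ℂ}
    (hA : A.IsHermitian) (ε : ℝ) (S : Finset n)
    (hS : ∀ i ∈ S, 0 < ε * hA.eigenvalues i)
    (W : Submodule ℂ (EuclideanSpace ℂ n))
    (hW : ∀ v ∈ W, ⟪v, Matrix.toEuclideanLin A v⟫_ℂ = 0) :
    S.card + Module.finrank ℂ W ≤ Fintype.card n := by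
  classical
  set u := hA.eigenvectorBasis with hu
  set V : Submodule ℂ (EuclideanSpace ℂ n) :=
    Submodule.span ℂ (u '' (S : Set n)) with hVdef
  have hind : LinearIndependent ℂ (fun i : S => u i) :=
    (u.orthonormal.linearIndependent).comp Subtype.val Subtype.val_injective
  have hrange : Set.range (fun i : S => u i) = u '' (S : Set n) :=
    (Set.image_eq_range u (S : Set n)).symm
  have hV : Module.finrank ℂ V = S.card := by
    have := finrank_span_eq_card hind
    rw [hrange] at this
    rw [hVdef, this, Fintype.card_coe]
  have hEig : ∀ i, Matrix.toEuclideanLin A (u i) = (hA.eigenvalues i : ℂ) • u i := by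
    intro i
    apply (WithLp.equiv 2 (n → ℂ)).injective
    have h := hA.mulVec_eigenvectorBasis i
    rw [show (WithLp.equiv 2 (n → ℂ)) (Matrix.toEuclideanLin A (u i))
        = Matrix.toLin' A ((WithLp.equiv 2 (n → ℂ)) (u i)) from rfl]
    rw [show (WithLp.equiv 2 (n → ℂ)) ((hA.eigenvalues i : ℂ) • u i)
        = (hA.eigenvalues i : ℂ) • (WithLp.equiv 2 (n → ℂ)) (u i) from rfl]
    calc Matrix.toLin' A ((WithLp.equiv 2 (n → ℂ)) (u i))
        = A *ᵥ ⇑(u i) := rfl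
      _ = hA.eigenvalues i • ⇑(u i) := h
      _ = (hA.eigenvalues i : ℂ) • (WithLp.equiv 2 (n → ℂ)) (u i) := by
          funext j; simp [Pi.smul_apply, Complex.real_smul]
  have hVW : V ⊓ W = ⊥ := by
    rw [Submodule.eq_bot_iff]
    rintro v ⟨hvV, hvW⟩
    have hout : ∀ j ∉ S, u.repr v j = 0 := by
      intro j hj
      have hle : V ≤ LinearMap.ker ((innerSL ℂ (u j)).toLinearMap) := by
        rw [hVdef, Submodule.span_le]
        rintro _ ⟨i, hi, rfl⟩
        simp only [SetLike.mem_coe, LinearMap.mem_ker, ContinuousLinearMap.coe_coe,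
          innerSL_apply_apply]
        exact u.orthonormal.2 (fun h => hj (h ▸ hi))
      have h2 := hle hvV
      simp only [LinearMap.mem_ker, ContinuousLinearMap.coe_coe, innerSL_apply_apply] at h2
      rw [u.repr_apply_apply]
      exact h2
    have hrepr : ∀ i, u.repr (Matrix.toEuclideanLin A v) i
        = (hA.eigenvalues i : ℂ) * u.repr v i := by
      intro i
      rw [u.repr_apply_apply, u.repr_apply_apply,
        ← (Matrix.isHermitian_iff_isSymmetric.1 hA) (u i) v, hEig i,
        inner_smul_left]
      simp [Complex.conj_ofReal]
    have hinner : (0 : ℂ) = ∑ i ∈ S,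
        ((hA.eigenvalues i * Complex.normSq (u.repr v i) : ℝ) : ℂ) := by
      rw [← hW v hvW, ← u.repr.inner_map_map v (Matrix.toEuclideanLin A v)]
      rw [show ⟪u.repr v, u.repr (Matrix.toEuclideanLin A v)⟫_ℂ
          = ∑ i, conj (u.repr v i) * u.repr (Matrix.toEuclideanLin A v) i from by
        simp only [PiLp.inner_apply, RCLike.inner_apply, mul_comm]]
      rw [← Finset.sum_subset (Finset.subset_univ S)
        (fun i _ hi => by rw [hout i hi]; simp)]
      refine Finset.sum_congr rfl fun i hi => ?_
      rw [hrepr i, Complex.ofReal_mul, Complex.normSq_eq_conj_mul_self]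
      ring
    have hre : (0 : ℝ) = ∑ i ∈ S, hA.eigenvalues i * Complex.normSq (u.repr v i) := by
      have := hinner
      push_cast at this
      exact_mod_cast this
    have hzero : ∀ i ∈ S, u.repr v i = 0 := by
      have hsum : ∑ i ∈ S, ε * (hA.eigenvalues i * Complex.normSq (u.repr v i)) = 0 := by
        rw [← Finset.mul_sum, ← hre, mul_zero]
      have hnn : ∀ i ∈ S, 0 ≤ ε * (hA.eigenvalues i * Complex.normSq (u.repr v i)) := by
        intro i hi
        rw [← mul_assoc]
        exact mul_nonneg (le_of_lt (hS i hi)) (Complex.normSq_nonneg _)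
      intro i hi
      have := (Finset.sum_eq_zero_iff_of_nonneg hnn).1 hsum i hi
      rw [← mul_assoc] at this
      have hq : Complex.normSq (u.repr v i) = 0 := by
        rcases mul_eq_zero.1 this with h | h
        · exact absurd h (ne_of_gt (hS i hi))
        · exact h
      exact Complex.normSq_eq_zero.1 hq
    have : u.repr v = 0 := by
      ext i
      by_cases hi : i ∈ S
      · simpa using hzero i hi
      · simpa using hout i hi
    exact u.repr.map_eq_zero_iff.1 this
  have hdim := Submodule.finrank_sup_add_finrank_inf_eq V W
  rw [hVW, finrank_bot, add_zero, hV] at hdim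
  calc S.card + Module.finrank ℂ W = Module.finrank ℂ ↥(V ⊔ W) := hdim.symm
    _ ≤ Module.finrank ℂ (EuclideanSpace ℂ n) := Submodule.finrank_le _
    _ = Fintype.card n := finrank_euclideanSpace

/-- An invertible hermitian matrix of block form `[[0, B], [Bᴴ, D]]` has signature zero. -/
theorem signature_metabolic_zero {k : ℕ} (B D : Matrix (Fin k) (Fin k) ℂ)
    (hD : D.IsHermitian)
    (hC : (Matrix.fromBlocks (0 : Matrix (Fin k) (Fin k) ℂ) B Bᴴ D).IsHermitian)
    (hdet : (Matrix.fromBlocks (0 : Matrix (Fin k) (Fin k) ℂ) B Bᴴ D).det ≠ 0) :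
    hermSig hC = 0 := by
  classical
  set A := Matrix.fromBlocks (0 : Matrix (Fin k) (Fin k) ℂ) B Bᴴ D with hAdef
  have hne : ∀ i, hC.eigenvalues i ≠ 0 := by
    intro i hi
    apply hdet
    rw [hC.det_eq_prod_eigenvalues]
    refine Finset.prod_eq_zero (Finset.mem_univ i) ?_
    rw [hi]; norm_num
  -- the isotropic subspace
  let π : EuclideanSpace ℂ (Fin k ⊕ Fin k) →ₗ[ℂ] (Fin k → ℂ) :=
    { toFun := fun v j => v (Sum.inr j)
      map_add' := fun x y => rfl
      map_smul' := fun c x => rfl }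
  set W := LinearMap.ker π with hWdef
  have hWrank : Module.finrank ℂ W = k := by
    have hsurj : Function.Surjective π := fun y =>
      ⟨(WithLp.equiv 2 _).symm (Sum.elim 0 y), rfl⟩
    have h1 := LinearMap.finrank_range_add_finrank_ker π
    rw [LinearMap.range_eq_top.2 hsurj, finrank_top,
      Module.finrank_fintype_fun_eq_card, finrank_euclideanSpace,
      Fintype.card_sum, Fintype.card_fin] at h1
    rw [hWdef]
    omega
  have hiso : ∀ v ∈ W, ⟪v, Matrix.toEuclideanLin A v⟫_ℂ = 0 := by
    intro v hv
    have hv' : ∀ j, v (Sum.inr j) = 0 := fun j => congrFun (LinearMap.mem_ker.1 hv) j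
    have hTv : ∀ s, (Matrix.toEuclideanLin A v) s = (A *ᵥ ⇑v) s := fun _ => rfl
    have h1 : ∀ i, (A *ᵥ ⇑v) (Sum.inl i) = 0 := by
      intro i
      show ∑ t, A (Sum.inl i) t * v t = 0
      rw [Fintype.sum_sum_type]
      simp only [hAdef, fromBlocks_apply₁₁, fromBlocks_apply₁₂, Matrix.zero_apply,
        zero_mul, hv', mul_zero, Finset.sum_const_zero, add_zero]
    simp only [PiLp.inner_apply, RCLike.inner_apply, Fintype.sum_sum_type, hTv, h1, hv',
      map_zero, zero_mul, mul_zero, Finset.sum_const_zero, add_zero]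
  have hp := aux_card_le hC 1 (Finset.univ.filter fun i => 0 < hC.eigenvalues i)
    (fun i hi => by simpa using (Finset.mem_filter.1 hi).2) W hiso
  have hq := aux_card_le hC (-1) (Finset.univ.filter fun i => hC.eigenvalues i < 0)
    (fun i hi => by
      have := (Finset.mem_filter.1 hi).2
      nlinarith) W hiso
  have hpq : (Finset.univ.filter fun i => 0 < hC.eigenvalues i).card
      + (Finset.univ.filter fun i => hC.eigenvalues i < 0).card
      = Fintype.card (Fin k ⊕ Fin k) := by
    have hsplit := Finset.card_filter_add_card_filter_not
      (s := (Finset.univ : Finset (Fin k ⊕ Fin k)))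
      (p := fun i => 0 < hC.eigenvalues i)
    have heq : Finset.filter (fun i => ¬ 0 < hC.eigenvalues i) Finset.univ
        = Finset.filter (fun i => hC.eigenvalues i < 0) Finset.univ :=
      Finset.filter_congr fun i _ =>
        ⟨fun h => lt_of_le_of_ne (not_lt.1 h) (hne i), fun h => not_lt.2 h.le⟩
    rw [heq, Finset.card_univ] at hsplit
    exact hsplit
  rw [hWrank] at hp hq
  rw [Fintype.card_sum, Fintype.card_fin] at hp hq hpq
  unfold hermSig
  omega
end

section
/- If χ: H → S^1 is a character factoring through H/(t^k-1)H but not factoring through H/(t^l-1)H for any 0 < l < k, then the representation α_{(z,χ)}: Z ⋉ H → U(k) given by (n,h) ↦ z^n S^n diag(χ(h), χ(th), ..., χ(t^{k-1}h)) is irreducible, for any z ∈ S^1. -/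
open Matrix

/-- The `k×k` cyclic permutation matrix raised to the `n`-th power (entries indexed by `ZMod k`). -/
def cycS (k : ℕ) [NeZero k] (n : ℤ) : Matrix (ZMod k) (ZMod k) ℂ :=
  Matrix.of fun i j => if i = j + (n : ZMod k) then 1 else 0

/-- The metabelian representation `α_{(z,χ)} : (n, h) ↦ zⁿ Sⁿ diag(χ(h), χ(th), …, χ(t^{k-1}h))`. -/
noncomputable def alphaMat {H : Type*} [AddCommGroup H] (k : ℕ) [NeZero k] (t : AddAut H)
    (z : ℂ) (χ : H → ℂ) (n : ℤ) (h : H) : Matrix (ZMod k) (ZMod k) ℂ :=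
  z ^ n • (cycS k n * Matrix.diagonal fun i : ZMod k => χ ((i.val • t) h))

/-!
The matrices `α(0, h)` are diagonal with entries `m ↦ χ(t^m h)`. Since `χ` does not factor
through `H/(t^l-1)H` for `0 < l < k`, these diagonals separate the points of `ZMod k`, so by
Lagrange interpolation the algebra they generate contains every coordinate projection; hence an
invariant subspace is spanned by standard basis vectors. The cyclic shifts `α(n, 0)`, scalar
multiples of `Sⁿ`, permute the standard basis vectors transitively, so a nonzero invariant
subspace contains all of them.
-/

namespace Submodule

variable {K A : Type*} [CommSemiring K] [Semiring A] [Algebra K A]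

def multipliers (W : Submodule K A) : Subalgebra K A where
  carrier := {g | ∀ v ∈ W, g * v ∈ W}
  mul_mem' {g g'} hg hg' v hv := by simpa only [mul_assoc] using hg _ (hg' v hv)
  add_mem' hg hg' v hv := by simpa only [add_mul] using W.add_mem (hg v hv) (hg' v hv)
  algebraMap_mem' c v hv := by simpa only [Algebra.smul_def] using W.smul_mem c hv

theorem mem_multipliers {W : Submodule K A} {g : A} : g ∈ W.multipliers ↔ ∀ v ∈ W, g * v ∈ W :=
  Iff.rfl

end Submodule

section Interpolation

variable {K ι : Type*} [Field K] [Fintype ι] [DecidableEq ι]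

/-- Lagrange interpolation: `∏_{j ≠ i} (g_j - g_j(j)) / (g_j(i) - g_j(j))` is the indicator
of `i` when `g_j(i) ≠ g_j(j)`. -/
theorem Subalgebra.single_one_mem_of_separatesPoints {S : Subalgebra K (ι → K)}
    (hS : (S : Set (ι → K)).SeparatesPoints) (i : ι) : Pi.single i 1 ∈ S := by
  have hsep : ∀ j, ∃ g ∈ S, j ≠ i → g i ≠ g j := fun j => by
    by_cases hj : j = i
    · exact ⟨0, S.zero_mem, fun h => absurd hj h⟩
    · obtain ⟨g, hg, hgij⟩ := hS (Ne.symm hj)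
      exact ⟨g, hg, fun _ => hgij⟩
  choose g hgS hg using hsep
  let e : ι → ι → K := fun j => (g j i - g j j)⁻¹ • (g j - algebraMap K (ι → K) (g j j))
  have he : ∏ j ∈ Finset.univ.erase i, e j = Pi.single i 1 := by
    ext m
    rw [Finset.prod_apply]
    by_cases hm : m = i
    · subst hm
      rw [Pi.single_eq_same]
      refine Finset.prod_eq_one fun j hj => ?_
      simp [e, inv_mul_cancel₀ (sub_ne_zero.mpr (hg j (Finset.ne_of_mem_erase hj)))]
    · rw [Pi.single_eq_of_ne hm]
      exact Finset.prod_eq_zero (Finset.mem_erase.mpr ⟨hm, Finset.mem_univ m⟩) (by simp [e])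
  exact he ▸ S.prod_mem fun j _ => S.smul_mem (S.sub_mem (hgS j) (S.algebraMap_mem _)) _

theorem Submodule.eq_top_of_forall_single_one_mem {W : Submodule K (ι → K)}
    (hW : ∀ i, Pi.single i 1 ∈ W) : W = ⊤ := by
  rw [eq_top_iff, ← (Pi.basisFun K ι).span_eq, span_le]
  rintro _ ⟨i, rfl⟩
  simpa using hW i

theorem Submodule.eq_bot_or_eq_top_of_separatesPoints {W : Submodule K (ι → K)}
    (hsep : (W.multipliers : Set (ι → K)).SeparatesPoints)
    (htrans : ∀ i j, Pi.single i 1 ∈ W → Pi.single j 1 ∈ W) : W = ⊥ ∨ W = ⊤ := by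
  refine or_iff_not_imp_left.mpr fun hW => eq_top_of_forall_single_one_mem fun j => ?_
  obtain ⟨v, hv, hv0⟩ := W.exists_mem_ne_zero_of_ne_bot hW
  obtain ⟨i, hi⟩ := Function.ne_iff.mp hv0
  refine htrans i j ?_
  have hvi : Pi.single i (v i) ∈ W := by
    simpa [← Pi.single_mul_left] using
      mem_multipliers.mp (Subalgebra.single_one_mem_of_separatesPoints hsep i) v hv
  simpa [← Pi.single_smul', inv_mul_cancel₀ hi] using W.smul_mem (v i)⁻¹ hvi

end Interpolation

theorem exists_apply_nsmul_ne {H β : Type*} [Add H] {χ : H → β} {t : AddAut H} {a b : ℕ}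
    (hab : a ≤ b) (h : ∃ x, χ (((b - a) • t) x) ≠ χ x) :
    ∃ y, χ ((a • t) y) ≠ χ ((b • t) y) := by
  obtain ⟨x, hx⟩ := h
  refine ⟨(-(a • t)) x, ?_⟩
  rwa [AddAut.apply_neg_self, ← Nat.sub_add_cancel hab, add_nsmul, AddAut.add_apply,
    AddAut.apply_neg_self, ne_comm]

theorem exists_apply_val_nsmul_ne {H β : Type*} [Add H] {k : ℕ} [NeZero k] {χ : H → β}
    {t : AddAut H} (hχ : ∀ l : ℕ, 0 < l → l < k → ∃ a : H, χ ((l • t) a) ≠ χ a)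
    {i j : ZMod k} (hij : i ≠ j) : ∃ h, χ ((i.val • t) h) ≠ χ ((j.val • t) h) := by
  wlog hlt : i.val < j.val generalizing i j
  · obtain ⟨h, hh⟩ := this hij.symm <|
      (Ne.symm fun h => hij (ZMod.val_injective k h)).lt_of_le (not_lt.mp hlt)
    exact ⟨h, hh.symm⟩
  exact exists_apply_nsmul_ne hlt.le (hχ _ (by omega) (by have := j.val_lt; omega))

theorem cycS_zero (k : ℕ) [NeZero k] : cycS k 0 = 1 := by
  ext i j
  simp [cycS, one_apply]

theorem cycS_mulVec_single (k : ℕ) [NeZero k] (n : ℤ) (i : ZMod k) (c : ℂ) :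
    cycS k n *ᵥ Pi.single i c = Pi.single (i + n) c := by
  ext m
  simp [cycS, mulVec_single, Pi.single_apply]

section alphaMat

variable {H : Type*} [AddCommGroup H] (k : ℕ) [NeZero k] (t : AddAut H) (z : ℂ) (χ : H → ℂ)

theorem alphaMat_zero_left (h : H) :
    alphaMat k t z χ 0 h = diagonal fun i : ZMod k => χ ((i.val • t) h) := by
  simp [alphaMat, cycS_zero]

theorem alphaMat_zero_right (n : ℤ) : alphaMat k t z χ n 0 = (z ^ n * χ 0) • cycS k n := by
  ext i j
  simp [alphaMat, cycS, mul_comm]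

end alphaMat

theorem alphaMat_irreducible_general {H : Type*} [AddCommGroup H] (k : ℕ) [NeZero k]
    (t : AddAut H) (z : ℂ) (hz : ‖z‖ = 1) (χ : H → ℂ)
    (hχnorm : ∀ a : H, ‖χ a‖ = 1)
    (hχnofac : ∀ l : ℕ, 0 < l → l < k → ∃ a : H, χ ((l • t) a) ≠ χ a) :
    ∀ W : Submodule ℂ (ZMod k → ℂ),
      (∀ (n : ℤ) (a : H) (v : ZMod k → ℂ), v ∈ W → (alphaMat k t z χ n a).mulVec v ∈ W) →
      W = ⊥ ∨ W = ⊤ := by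
  intro W hW
  refine W.eq_bot_or_eq_top_of_separatesPoints (fun i j hij => ?_) fun i j hi => ?_
  · obtain ⟨h, hh⟩ := exists_apply_val_nsmul_ne hχnofac hij
    refine ⟨fun m => χ ((m.val • t) h), Submodule.mem_multipliers.mpr fun v hv => ?_, hh⟩
    convert hW 0 h v hv using 1
    ext m
    rw [alphaMat_zero_left, mulVec_diagonal, Pi.mul_apply]
  · have hz0 : z ≠ 0 := norm_ne_zero_iff.mp (hz ▸ one_ne_zero)
    have hχ0 : χ 0 ≠ 0 := norm_ne_zero_iff.mp (hχnorm 0 ▸ one_ne_zero)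
    -- the shift by `n = j - i` carries `eᵢ` to a multiple of `eⱼ`
    have := W.smul_mem (z ^ ((j - i).val : ℤ) * χ 0)⁻¹ (hW (j - i).val 0 _ hi)
    rwa [alphaMat_zero_right, smul_mulVec, cycS_mulVec_single, smul_smul,
      inv_mul_cancel₀ (mul_ne_zero (zpow_ne_zero _ hz0) hχ0), one_smul, Int.cast_natCast,
      ZMod.natCast_zmod_val, add_sub_cancel] at this

/-- If the character `χ` factors through `H/(t^k-1)H` but through no `H/(t^l-1)H` with
`0 < l < k`, then `α_{(z,χ)}` is irreducible for any `z ∈ S¹`. -/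
theorem alphaMat_irreducible {H : Type*} [AddCommGroup H] (k : ℕ) [NeZero k]
    (t : AddAut H) (z : ℂ) (hz : ‖z‖ = 1) (χ : H → ℂ)
    (hχmul : ∀ a b : H, χ (a + b) = χ a * χ b)
    (hχnorm : ∀ a : H, ‖χ a‖ = 1)
    (hχfac : ∀ a : H, χ ((k • t) a) = χ a)
    (hχnofac : ∀ l : ℕ, 0 < l → l < k → ∃ a : H, χ ((l • t) a) ≠ χ a) :
    ∀ W : Submodule ℂ (ZMod k → ℂ),
      (∀ (n : ℤ) (a : H) (v : ZMod k → ℂ), v ∈ W → (alphaMat k t z χ n a).mulVec v ∈ W) →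
      W = ⊥ ∨ W = ⊤ :=
  alphaMat_irreducible_general k t z hz χ hχnorm hχnofac
end

section
/- Let H be an abelian group with automorphism t and let k_1, k_2 be coprime positive integers. For z_1, z_2 ∈ S^1 and characters χ_1, χ_2: H → S^1 factoring through H/(t^{k_1}-1)H and H/(t^{k_2}-1)H respectively, the tensor product of the representations α_{(k_1,z_1,χ_1)} and α_{(k_2,z_2,χ_2)} of Z ⋉ H is unitarily equivalent to α_{(k_1 k_2, z_1 z_2, χ_1 χ_2)}. -/
/-!
The Chinese remainder isomorphism `ZMod (k₁ * k₂) ≃+* ZMod k₁ × ZMod k₂` is additive, so the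
shift `i ↦ i + n` on `ZMod (k₁ * k₂)` corresponds to the pair of shifts on the factors; and since
`χᵢ ∘ tᵏⁱ = χᵢ`, the diagonal entry `χᵢ (tʲ a)` only depends on `j mod kᵢ`. Hence the Kronecker
product is `α_{(k₁k₂, z₁z₂, χ₁χ₂)}` reindexed along this bijection, and reindexing is conjugation
by the (unitary) permutation matrix of the bijection.
-/

open Matrix Kronecker

namespace Matrix

variable {m n R : Type*} [DecidableEq m] [DecidableEq n] [NonAssocSemiring R] [StarRing R]

lemma conjTranspose_toMatrix_toPEquiv (e : m ≃ n) :
    (e.toPEquiv.toMatrix : Matrix m n R)ᴴ = e.symm.toPEquiv.toMatrix := by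
  ext i j
  simp only [conjTranspose_apply, PEquiv.toMatrix_apply, Equiv.toPEquiv_apply, Option.mem_def,
    Option.some_inj, Equiv.symm_apply_eq]
  split_ifs <;> simp_all [eq_comm]

lemma toMatrix_toPEquiv_mul_conjTranspose_self [Fintype n] (e : m ≃ n) :
    (e.toPEquiv.toMatrix : Matrix m n R) * (e.toPEquiv.toMatrix : Matrix m n R)ᴴ = 1 := by
  rw [conjTranspose_toMatrix_toPEquiv, ← PEquiv.toMatrix_trans, ← Equiv.toPEquiv_trans,
    Equiv.self_trans_symm, Equiv.toPEquiv_refl, PEquiv.toMatrix_refl]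

lemma conjTranspose_toMatrix_toPEquiv_mul_self [Fintype m] (e : m ≃ n) :
    (e.toPEquiv.toMatrix : Matrix m n R)ᴴ * (e.toPEquiv.toMatrix : Matrix m n R) = 1 := by
  rw [conjTranspose_toMatrix_toPEquiv, ← PEquiv.toMatrix_trans, ← Equiv.toPEquiv_trans,
    Equiv.symm_trans_self, Equiv.toPEquiv_refl, PEquiv.toMatrix_refl]

lemma submatrix_equiv_eq_toMatrix_toPEquiv_conj [Fintype n] (e : m ≃ n) (A : Matrix n n R) :
    A.submatrix e e =
      (e.toPEquiv.toMatrix : Matrix m n R) * A * (e.toPEquiv.toMatrix : Matrix m n R)ᴴ := by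
  rw [conjTranspose_toMatrix_toPEquiv, PEquiv.toMatrix_toPEquiv_mul,
    PEquiv.mul_toMatrix_toPEquiv, submatrix_submatrix, Equiv.symm_symm]
  rfl

end Matrix

lemma ZMod.chineseRemainder_fst {k l : ℕ} (h : k.Coprime l) (x : ZMod (k * l)) :
    (ZMod.chineseRemainder h x).1 = ZMod.cast x :=
  Prod.fst_zmod_cast x

lemma ZMod.chineseRemainder_snd {k l : ℕ} (h : k.Coprime l) (x : ZMod (k * l)) :
    (ZMod.chineseRemainder h x).2 = ZMod.cast x :=
  Prod.snd_zmod_cast x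

section

variable {H : Type*} [AddCommGroup H] (t : AddAut H) (χ : H → ℂ)

lemma alphaMat_apply (k : ℕ) [NeZero k] (z : ℂ) (n : ℤ) (a : H) (i j : ZMod k) :
    alphaMat k t z χ n a i j = if i = j + n then z ^ n * χ ((j.val • t) a) else 0 := by
  simp [alphaMat, cycS, mul_diagonal]

lemma periodic_apply_nsmul {k : ℕ} (hχ : ∀ a, χ ((k • t) a) = χ a) (a : H) :
    Function.Periodic (fun j : ℕ => χ ((j • t) a)) k := by
  intro j
  simp only [add_comm j, add_nsmul, AddAut.add_apply, hχ]

lemma apply_cast_val_nsmul {k l : ℕ} [NeZero k] [NeZero l] (hχ : ∀ a, χ ((k • t) a) = χ a)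
    (x : ZMod l) (a : H) :
    χ (((ZMod.cast x : ZMod k).val • t) a) = χ ((x.val • t) a) := by
  rw [ZMod.cast_eq_val, ZMod.val_natCast]
  exact (periodic_apply_nsmul t χ hχ a).map_mod_nat x.val

variable {k₁ k₂ : ℕ} [NeZero k₁] [NeZero k₂] (hco : k₁.Coprime k₂) {χ₁ χ₂ : H → ℂ}

lemma kronecker_alphaMat_apply_chineseRemainder (hχ₁ : ∀ a, χ₁ ((k₁ • t) a) = χ₁ a)
    (hχ₂ : ∀ a, χ₂ ((k₂ • t) a) = χ₂ a) (z₁ z₂ : ℂ) (n : ℤ) (a : H) (x y : ZMod (k₁ * k₂)) :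
    (alphaMat k₁ t z₁ χ₁ n a ⊗ₖ alphaMat k₂ t z₂ χ₂ n a)
        (ZMod.chineseRemainder hco x) (ZMod.chineseRemainder hco y) =
      alphaMat (k₁ * k₂) t (z₁ * z₂) (fun b => χ₁ b * χ₂ b) n a x y := by
  set e := ZMod.chineseRemainder hco
  have hshift : ((e x).1 = (e y).1 + n ∧ (e x).2 = (e y).2 + n) ↔ x = y + n := by
    rw [← e.injective.eq_iff, map_add, map_intCast, Prod.ext_iff, Prod.fst_add, Prod.snd_add,
      Prod.fst_intCast, Prod.snd_intCast]
  have hχ₁y : χ₁ (((e y).1.val • t) a) = χ₁ ((y.val • t) a) := by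
    rw [ZMod.chineseRemainder_fst, apply_cast_val_nsmul t χ₁ hχ₁]
  have hχ₂y : χ₂ (((e y).2.val • t) a) = χ₂ ((y.val • t) a) := by
    rw [ZMod.chineseRemainder_snd, apply_cast_val_nsmul t χ₂ hχ₂]
  rw [kroneckerMap_apply, alphaMat_apply, alphaMat_apply, alphaMat_apply, ite_zero_mul_ite_zero,
    hχ₁y, hχ₂y, mul_zpow]
  exact if_congr hshift (by ring) rfl

lemma kronecker_alphaMat_eq_submatrix (hχ₁ : ∀ a, χ₁ ((k₁ • t) a) = χ₁ a)
    (hχ₂ : ∀ a, χ₂ ((k₂ • t) a) = χ₂ a) (z₁ z₂ : ℂ) (n : ℤ) (a : H) :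
    alphaMat k₁ t z₁ χ₁ n a ⊗ₖ alphaMat k₂ t z₂ χ₂ n a =
      (alphaMat (k₁ * k₂) t (z₁ * z₂) (fun b => χ₁ b * χ₂ b) n a).submatrix
        (ZMod.chineseRemainder hco).symm (ZMod.chineseRemainder hco).symm := by
  ext p q
  obtain ⟨x, rfl⟩ := (ZMod.chineseRemainder hco).surjective p
  obtain ⟨y, rfl⟩ := (ZMod.chineseRemainder hco).surjective q
  simp only [submatrix_apply, RingEquiv.symm_apply_apply]
  exact kronecker_alphaMat_apply_chineseRemainder t hco hχ₁ hχ₂ z₁ z₂ n a x y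

end

theorem alphaMat_tensor_general {H : Type*} [AddCommGroup H] (k₁ k₂ : ℕ) [NeZero k₁] [NeZero k₂]
    (hco : Nat.Coprime k₁ k₂) (t : AddAut H) (z₁ z₂ : ℂ)
    (χ₁ χ₂ : H → ℂ)
    (hχ₁fac : ∀ a : H, χ₁ ((k₁ • t) a) = χ₁ a)
    (hχ₂fac : ∀ a : H, χ₂ ((k₂ • t) a) = χ₂ a) :
    ∃ U : Matrix (ZMod k₁ × ZMod k₂) (ZMod (k₁ * k₂)) ℂ,
      U * Uᴴ = 1 ∧ Uᴴ * U = 1 ∧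
      ∀ (n : ℤ) (a : H),
        (alphaMat k₁ t z₁ χ₁ n a) ⊗ₖ (alphaMat k₂ t z₂ χ₂ n a) =
          U * alphaMat (k₁ * k₂) t (z₁ * z₂) (fun b => χ₁ b * χ₂ b) n a * Uᴴ := by
  set e := (ZMod.chineseRemainder hco).symm.toEquiv
  refine ⟨e.toPEquiv.toMatrix, toMatrix_toPEquiv_mul_conjTranspose_self e,
    conjTranspose_toMatrix_toPEquiv_mul_self e, fun n a => ?_⟩
  rw [kronecker_alphaMat_eq_submatrix t hco hχ₁fac hχ₂fac]
  exact submatrix_equiv_eq_toMatrix_toPEquiv_conj e _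

/-- For coprime `k₁, k₂` the tensor (Kronecker) product of `α_{(k₁,z₁,χ₁)}` and `α_{(k₂,z₂,χ₂)}`
is unitarily equivalent to `α_{(k₁k₂, z₁z₂, χ₁χ₂)}`. -/
theorem alphaMat_tensor {H : Type*} [AddCommGroup H] (k₁ k₂ : ℕ) [NeZero k₁] [NeZero k₂]
    (hco : Nat.Coprime k₁ k₂) (t : AddAut H) (z₁ z₂ : ℂ)
    (hz₁ : ‖z₁‖ = 1) (hz₂ : ‖z₂‖ = 1) (χ₁ χ₂ : H → ℂ)
    (hχ₁mul : ∀ a b : H, χ₁ (a + b) = χ₁ a * χ₁ b)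
    (hχ₂mul : ∀ a b : H, χ₂ (a + b) = χ₂ a * χ₂ b)
    (hχ₁norm : ∀ a : H, ‖χ₁ a‖ = 1) (hχ₂norm : ∀ a : H, ‖χ₂ a‖ = 1)
    (hχ₁fac : ∀ a : H, χ₁ ((k₁ • t) a) = χ₁ a)
    (hχ₂fac : ∀ a : H, χ₂ ((k₂ • t) a) = χ₂ a) :
    ∃ U : Matrix (ZMod k₁ × ZMod k₂) (ZMod (k₁ * k₂)) ℂ,
      U * Uᴴ = 1 ∧ Uᴴ * U = 1 ∧
      ∀ (n : ℤ) (a : H),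
        (alphaMat k₁ t z₁ χ₁ n a) ⊗ₖ (alphaMat k₂ t z₂ χ₂ n a) =
          U * alphaMat (k₁ * k₂) t (z₁ * z₂) (fun b => χ₁ b * χ₂ b) n a * Uᴴ :=
  alphaMat_tensor_general k₁ k₂ hco t z₁ z₂ χ₁ χ₂ hχ₁fac hχ₂fac
end

section
/- Let H be an abelian group with automorphism t and let k_1, k_2 be coprime positive integers. If characters χ_1, χ_2: H → S^1 factor through H/(t^{k_1}-1)H and H/(t^{k_2}-1)H respectively, and the product character χ_1 χ_2 (which factors through H/(t^{k_1 k_2}-1)H) factors through H/(t^k-1)H for some k < k_1 k_2, then χ_1 factors through H/(t^l-1)H for some l < k_1 or χ_2 factors through H/(t^l-1)H for some l < k_2. -/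
/-!
The integers `n` with `χ ∘ tⁿ = χ` form a subgroup of `ℤ`, so they are closed under `gcd`.
Since `χ₁χ₂` has period `k` and `χ₂` has period `k₂`, the nowhere-vanishing `χ₂` can be
cancelled: `χ₁` has period `k k₂`, hence period `gcd(k k₂, k₁) = gcd(k, k₁)`; symmetrically
`χ₂` has period `gcd(k, k₂)`. If neither gcd were a proper divisor, `k₁ k₂` would divide
`0 < k < k₁ k₂`.
-/

namespace AddSubgroup

variable {S : AddSubgroup ℤ}

theorem natCast_mul_mem_right {m : ℕ} (hm : (m : ℤ) ∈ S) (n : ℕ) :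
    ((m * n : ℕ) : ℤ) ∈ S := by
  simpa [mul_comm] using zsmul_mem hm n

theorem natCast_mul_mem_left {n : ℕ} (hn : (n : ℤ) ∈ S) (m : ℕ) :
    ((m * n : ℕ) : ℤ) ∈ S :=
  mul_comm n m ▸ natCast_mul_mem_right hn m

theorem natCast_gcd_mem {m n : ℕ} (hm : (m : ℤ) ∈ S) (hn : (n : ℤ) ∈ S) :
    ((m.gcd n : ℕ) : ℤ) ∈ S := by
  rw [Nat.gcd_eq_gcd_ab, mul_comm (m : ℤ), mul_comm (n : ℤ)]
  exact add_mem (zsmul_mem hm _) (zsmul_mem hn _)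

end AddSubgroup

theorem Nat.Coprime.gcd_lt_or_gcd_lt {k₁ k₂ k : ℕ} (hco : k₁.Coprime k₂) (hk₁ : 0 < k₁)
    (hk₂ : 0 < k₂) (hk : 0 < k) (hklt : k < k₁ * k₂) : k.gcd k₁ < k₁ ∨ k.gcd k₂ < k₂ := by
  by_contra! h
  have h₁ : k₁ ∣ k :=
    Nat.gcd_eq_right_iff_dvd.mp ((Nat.gcd_le_right k hk₁).antisymm h.1)
  have h₂ : k₂ ∣ k :=
    Nat.gcd_eq_right_iff_dvd.mp ((Nat.gcd_le_right k hk₂).antisymm h.2)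
  exact hklt.not_ge (Nat.le_of_dvd hk (hco.mul_dvd_of_dvd_of_dvd h₁ h₂))

namespace AddAut

variable {H α : Type*} [Add H]

def periods (t : AddAut H) (f : H → α) : AddSubgroup ℤ where
  carrier := {n | ∀ a, f ((n • t) a) = f a}
  zero_mem' _ := by rw [zero_zsmul, zero_apply]
  add_mem' hm hn a := by rw [add_zsmul, add_apply, hm, hn]
  neg_mem' {n} hn a := by
    rw [← hn ((-n • t) a), ← add_apply, ← add_zsmul, add_neg_cancel, zero_zsmul, zero_apply]

variable {t : AddAut H}

theorem mem_periods {f : H → α} {n : ℤ} : n ∈ periods t f ↔ ∀ a, f ((n • t) a) = f a :=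
  Iff.rfl

theorem natCast_mem_periods {f : H → α} {n : ℕ} :
    (n : ℤ) ∈ periods t f ↔ ∀ a, f ((n • t) a) = f a := by
  simp only [mem_periods, natCast_zsmul]

theorem mem_periods_of_mul_mem_periods {M : Type*} [MulZeroClass M] [IsRightCancelMulZero M]
    {f g : H → M} (hg₀ : ∀ a, g a ≠ 0) {n : ℤ} (hfg : n ∈ periods t (f * g))
    (hg : n ∈ periods t g) :
    n ∈ periods t f := fun a =>
  mul_right_cancel₀ (hg₀ a) (by simpa only [Pi.mul_apply, hg a] using hfg a)

end AddAut

open AddAut AddSubgroup in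
theorem product_character_factors_general {H : Type*} [AddCommGroup H] (t : AddAut H)
    (k₁ k₂ : ℕ) (hk₁ : 0 < k₁) (hk₂ : 0 < k₂) (hco : Nat.Coprime k₁ k₂)
    (χ₁ χ₂ : H → ℂ)
    (hχ₁norm : ∀ a : H, ‖χ₁ a‖ = 1) (hχ₂norm : ∀ a : H, ‖χ₂ a‖ = 1)
    (hχ₁fac : ∀ a : H, χ₁ ((k₁ • t) a) = χ₁ a)
    (hχ₂fac : ∀ a : H, χ₂ ((k₂ • t) a) = χ₂ a)
    (k : ℕ) (hk : 0 < k) (hklt : k < k₁ * k₂)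
    (hfac : ∀ a : H, χ₁ ((k • t) a) * χ₂ ((k • t) a) = χ₁ a * χ₂ a) :
    (∃ l : ℕ, 0 < l ∧ l < k₁ ∧ ∀ a : H, χ₁ ((l • t) a) = χ₁ a) ∨
    (∃ l : ℕ, 0 < l ∧ l < k₂ ∧ ∀ a : H, χ₂ ((l • t) a) = χ₂ a) := by
  have hχ₁₀ : ∀ a, χ₁ a ≠ 0 := fun a h => by simpa [h] using hχ₁norm a
  have hχ₂₀ : ∀ a, χ₂ a ≠ 0 := fun a h => by simpa [h] using hχ₂norm a
  have hk₁per : (k₁ : ℤ) ∈ periods t χ₁ := natCast_mem_periods.mpr hχ₁fac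
  have hk₂per : (k₂ : ℤ) ∈ periods t χ₂ := natCast_mem_periods.mpr hχ₂fac
  have hkper : (k : ℤ) ∈ periods t (χ₁ * χ₂) := natCast_mem_periods.mpr hfac
  have hkk₂per : ((k * k₂ : ℕ) : ℤ) ∈ periods t χ₁ :=
    mem_periods_of_mul_mem_periods hχ₂₀ (natCast_mul_mem_right hkper k₂)
      (natCast_mul_mem_left hk₂per k)
  have hkk₁per : ((k * k₁ : ℕ) : ℤ) ∈ periods t χ₂ :=
    mem_periods_of_mul_mem_periods hχ₁₀
      (mul_comm χ₁ χ₂ ▸ natCast_mul_mem_right hkper k₁)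
      (natCast_mul_mem_left hk₁per k)
  have hg₁ : ((k.gcd k₁ : ℕ) : ℤ) ∈ periods t χ₁ :=
    hco.symm.gcd_mul_right_cancel k ▸ natCast_gcd_mem hkk₂per hk₁per
  have hg₂ : ((k.gcd k₂ : ℕ) : ℤ) ∈ periods t χ₂ :=
    hco.gcd_mul_right_cancel k ▸ natCast_gcd_mem hkk₁per hk₂per
  rcases hco.gcd_lt_or_gcd_lt hk₁ hk₂ hk hklt with h | h
  · exact .inl ⟨_, Nat.gcd_pos_of_pos_left _ hk, h, natCast_mem_periods.mp hg₁⟩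
  · exact .inr ⟨_, Nat.gcd_pos_of_pos_left _ hk, h, natCast_mem_periods.mp hg₂⟩

/-- If `k₁, k₂` are coprime, characters `χ₁, χ₂ : H → S¹` factor through `H/(t^{k₁}-1)H` and
`H/(t^{k₂}-1)H` respectively, and the product character `χ₁χ₂` factors through `H/(t^k-1)H` for
some `k < k₁k₂`, then `χ₁` factors through `H/(t^l-1)H` for some `l < k₁` or `χ₂` factors
through `H/(t^l-1)H` for some `l < k₂`. -/
theorem product_character_factors {H : Type*} [AddCommGroup H] (t : AddAut H)
    (k₁ k₂ : ℕ) (hk₁ : 0 < k₁) (hk₂ : 0 < k₂) (hco : Nat.Coprime k₁ k₂)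
    (χ₁ χ₂ : H → ℂ)
    (hχ₁mul : ∀ a b : H, χ₁ (a + b) = χ₁ a * χ₁ b)
    (hχ₂mul : ∀ a b : H, χ₂ (a + b) = χ₂ a * χ₂ b)
    (hχ₁norm : ∀ a : H, ‖χ₁ a‖ = 1) (hχ₂norm : ∀ a : H, ‖χ₂ a‖ = 1)
    (hχ₁fac : ∀ a : H, χ₁ ((k₁ • t) a) = χ₁ a)
    (hχ₂fac : ∀ a : H, χ₂ ((k₂ • t) a) = χ₂ a)
    (k : ℕ) (hk : 0 < k) (hklt : k < k₁ * k₂)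
    (hfac : ∀ a : H, χ₁ ((k • t) a) * χ₂ ((k • t) a) = χ₁ a * χ₂ a) :
    (∃ l : ℕ, 0 < l ∧ l < k₁ ∧ ∀ a : H, χ₁ ((l • t) a) = χ₁ a) ∨
    (∃ l : ℕ, 0 < l ∧ l < k₂ ∧ ∀ a : H, χ₂ ((l • t) a) = χ₂ a) :=
  product_character_factors_general t k₁ k₂ hk₁ hk₂ hco χ₁ χ₂ hχ₁norm hχ₂norm hχ₁fac hχ₂fac k hk
    hklt hfac
end

section
/- Let A be a 2g×2g integer matrix (a Seifert matrix) and define the signature function σ_z(A) = sign(A(1-z) + A^t(1-z̄)) for z on the unit circle. If A is metabolic, i.e., congruent to a matrix of block form [[0, B],[C, D]] with 0 a g×g zero block, then σ_z(A) = 0 for every z ∈ S^1 with z ≠ 1 such that det(Az - A^t) ≠ 0. -/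
open Matrix

variable {n : Type*} [Fintype n] [DecidableEq n]

lemma sum_dotProduct' {ι : Type*} (s : Finset ι) (f : ι → n → ℂ) (b : n → ℂ) :
    (∑ i ∈ s, f i) ⬝ᵥ b = ∑ i ∈ s, f i ⬝ᵥ b := by
  simp only [dotProduct, Finset.sum_apply, Finset.sum_mul]
  exact Finset.sum_comm

lemma dotProduct_sum' {ι : Type*} (s : Finset ι) (a : n → ℂ) (f : ι → n → ℂ) :
    a ⬝ᵥ (∑ i ∈ s, f i) = ∑ i ∈ s, a ⬝ᵥ f i := by
  simp only [dotProduct, Finset.sum_apply, Finset.mul_sum]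
  exact Finset.sum_comm

lemma herm_orth {H : Matrix n n ℂ} (hH : H.IsHermitian) (i j : n) :
    star (⇑(hH.eigenvectorBasis i)) ⬝ᵥ ⇑(hH.eigenvectorBasis j) = if i = j then 1 else 0 := by
  have := hH.eigenvectorBasis.orthonormal
  rw [orthonormal_iff_ite] at this
  have h := this i j
  rwa [EuclideanSpace.inner_eq_star_dotProduct, dotProduct_comm] at h

lemma herm_key {H : Matrix n n ℂ} (hH : H.IsHermitian) (S : Finset n) (c : ↥S → ℂ) :
    star (∑ i : ↥S, c i • ⇑(hH.eigenvectorBasis i)) ⬝ᵥ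
      (H *ᵥ ∑ i : ↥S, c i • ⇑(hH.eigenvectorBasis i)) =
    ((∑ i : ↥S, hH.eigenvalues i * Complex.normSq (c i) : ℝ) : ℂ) := by
  have hmv : H *ᵥ (∑ i : ↥S, c i • ⇑(hH.eigenvectorBasis i)) =
      ∑ i : ↥S, (c i * hH.eigenvalues i) • ⇑(hH.eigenvectorBasis i) := by
    rw [← H.mulVecLin_apply, map_sum]
    refine Finset.sum_congr rfl fun i _ => ?_
    rw [LinearMap.map_smul, H.mulVecLin_apply, hH.mulVec_eigenvectorBasis,
      RCLike.real_smul_eq_coe_smul (K := ℂ), smul_smul]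
    ring_nf
    rfl
  rw [hmv, star_sum]
  simp only [star_smul, sum_dotProduct', dotProduct_sum', smul_dotProduct,
    dotProduct_smul, herm_orth hH, smul_eq_mul, mul_ite, mul_one, mul_zero,
    Subtype.val_inj,
    Finset.sum_ite_eq, Finset.sum_ite_eq', Finset.mem_univ, if_true]
  push_cast
  refine Finset.sum_congr rfl fun i _ => ?_
  simp only [Complex.normSq_eq_conj_mul_self, RCLike.star_def]
  ring

lemma herm_li {H : Matrix n n ℂ} (hH : H.IsHermitian) :
    LinearIndependent ℂ (fun i => ⇑(hH.eigenvectorBasis i) : n → (n → ℂ)) := by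
  rw [Fintype.linearIndependent_iff]
  intro c hc j
  have h := congrArg (fun w => star (⇑(hH.eigenvectorBasis j)) ⬝ᵥ w) hc
  simpa [dotProduct_sum', dotProduct_smul, herm_orth hH] using h

lemma herm_card_le_pos {H : Matrix n n ℂ} (hH : H.IsHermitian)
    (W : Submodule ℂ (n → ℂ)) (hW : ∀ w ∈ W, star w ⬝ᵥ (H *ᵥ w) = 0)
    (S : Finset n) (hS : ∀ i ∈ S, 0 < hH.eigenvalues i) :
    S.card + Module.finrank ℂ W ≤ Fintype.card n := by
  classical
  set v : n → (n → ℂ) := fun i => ⇑(hH.eigenvectorBasis i) with hv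
  set V : Submodule ℂ (n → ℂ) := Submodule.span ℂ (Set.range fun i : ↥S => v i) with hVdef
  have hVrank : Module.finrank ℂ V = S.card := by
    have h := finrank_span_eq_card (R := ℂ) ((herm_li hH).comp ((↑) : ↥S → n) Subtype.val_injective)
    rw [Fintype.card_coe] at h
    exact h
  have hdisj : Disjoint V W := by
    rw [Submodule.disjoint_def]
    intro w hwV hwW
    obtain ⟨c, hc⟩ := (Submodule.mem_span_range_iff_exists_fun ℂ).1 hwV
    have h0 : star w ⬝ᵥ (H *ᵥ w) = 0 := hW w hwW
    rw [← hc, herm_key hH S c, Complex.ofReal_eq_zero] at h0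
    have hz : ∀ i : ↥S, c i = 0 := by
      intro i
      have := (Finset.sum_eq_zero_iff_of_nonneg (fun i _ =>
        mul_nonneg (le_of_lt (hS i.1 i.2)) (Complex.normSq_nonneg (c i)))).1 h0 i (Finset.mem_univ i)
      have hne := ne_of_gt (hS i.1 i.2)
      have : Complex.normSq (c i) = 0 := by
        rcases mul_eq_zero.1 this with h | h
        · exact absurd h hne
        · exact h
      exact Complex.normSq_eq_zero.1 this
    rw [← hc]
    simp [hz]
  calc S.card + Module.finrank ℂ W = Module.finrank ℂ V + Module.finrank ℂ W := by rw [hVrank]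
    _ = Module.finrank ℂ (V ⊔ W : Submodule ℂ (n → ℂ)) + Module.finrank ℂ (V ⊓ W : Submodule ℂ (n → ℂ)) :=
        (Submodule.finrank_sup_add_finrank_inf_eq V W).symm
    _ = Module.finrank ℂ (V ⊔ W : Submodule ℂ (n → ℂ)) := by
        rw [hdisj.eq_bot]; simp
    _ ≤ Module.finrank ℂ (n → ℂ) := Submodule.finrank_le _
    _ = Fintype.card n := Module.finrank_fintype_fun_eq_card ℂ

lemma herm_card_le_neg {H : Matrix n n ℂ} (hH : H.IsHermitian)
    (W : Submodule ℂ (n → ℂ)) (hW : ∀ w ∈ W, star w ⬝ᵥ (H *ᵥ w) = 0)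
    (S : Finset n) (hS : ∀ i ∈ S, hH.eigenvalues i < 0) :
    S.card + Module.finrank ℂ W ≤ Fintype.card n := by
  classical
  set v : n → (n → ℂ) := fun i => ⇑(hH.eigenvectorBasis i) with hv
  set V : Submodule ℂ (n → ℂ) := Submodule.span ℂ (Set.range fun i : ↥S => v i) with hVdef
  have hVrank : Module.finrank ℂ V = S.card := by
    have h := finrank_span_eq_card (R := ℂ) ((herm_li hH).comp ((↑) : ↥S → n) Subtype.val_injective)
    rw [Fintype.card_coe] at h
    exact h
  have hdisj : Disjoint V W := by
    rw [Submodule.disjoint_def]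
    intro w hwV hwW
    obtain ⟨c, hc⟩ := (Submodule.mem_span_range_iff_exists_fun ℂ).1 hwV
    have h0 : star w ⬝ᵥ (H *ᵥ w) = 0 := hW w hwW
    rw [← hc, herm_key hH S c, Complex.ofReal_eq_zero] at h0
    have hz : ∀ i : ↥S, c i = 0 := by
      intro i
      have := (Finset.sum_eq_zero_iff_of_nonpos (fun i _ =>
        mul_nonpos_of_nonpos_of_nonneg (le_of_lt (hS i.1 i.2))
          (Complex.normSq_nonneg (c i)))).1 h0 i (Finset.mem_univ i)
      have hne := ne_of_lt (hS i.1 i.2)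
      have : Complex.normSq (c i) = 0 := by
        rcases mul_eq_zero.1 this with h | h
        · exact absurd h hne
        · exact h
      exact Complex.normSq_eq_zero.1 this
    rw [← hc]
    simp [hz]
  calc S.card + Module.finrank ℂ W = Module.finrank ℂ V + Module.finrank ℂ W := by rw [hVrank]
    _ = Module.finrank ℂ (V ⊔ W : Submodule ℂ (n → ℂ)) + Module.finrank ℂ (V ⊓ W : Submodule ℂ (n → ℂ)) :=
        (Submodule.finrank_sup_add_finrank_inf_eq V W).symm
    _ = Module.finrank ℂ (V ⊔ W : Submodule ℂ (n → ℂ)) := by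
        rw [hdisj.eq_bot]; simp
    _ ≤ Module.finrank ℂ (n → ℂ) := Submodule.finrank_le _
    _ = Fintype.card n := Module.finrank_fintype_fun_eq_card ℂ

def extLin (g : ℕ) : (Fin g → ℂ) →ₗ[ℂ] (Fin g ⊕ Fin g → ℂ) where
  toFun x := Sum.elim x 0
  map_add' x y := by ext (i | i) <;> simp
  map_smul' r x := by ext (i | i) <;> simp


/-- If a `2g×2g` integer Seifert matrix `A` is metabolic (congruent over `ℤ` to a block matrix
`[[0,B],[C,D]]`), then for every `z` on the unit circle with `z ≠ 1` and `det(Az - Aᵀ) ≠ 0`,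
the signature `σ_z(A)` of the hermitian matrix `A(1-z) + Aᵀ(1-z̄)` is zero. -/
theorem metabolic_signature_zero (g : ℕ)
    (A : Matrix (Fin g ⊕ Fin g) (Fin g ⊕ Fin g) ℤ)
    (hmeta : ∃ (P : Matrix (Fin g ⊕ Fin g) (Fin g ⊕ Fin g) ℤ)
      (B C D : Matrix (Fin g) (Fin g) ℤ),
        IsUnit P.det ∧ P * A * Pᵀ = Matrix.fromBlocks 0 B C D)
    (z : ℂ) (hz : ‖z‖ = 1) (hz1 : z ≠ 1)
    (hΔ : (z • A.map (Int.cast : ℤ → ℂ) - (A.map (Int.cast : ℤ → ℂ))ᵀ).det ≠ 0)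
    (hH : ((1 - z) • A.map (Int.cast : ℤ → ℂ) +
      (1 - (starRingEnd ℂ) z) • (A.map (Int.cast : ℤ → ℂ))ᵀ).IsHermitian) :
    hermSig hH = 0 := by
  classical
  obtain ⟨P, B, C, D, hPu, hPAP⟩ := hmeta
  set cc : ℤ →+* ℂ := Int.castRingHom ℂ with hcc
  set Ac : Matrix (Fin g ⊕ Fin g) (Fin g ⊕ Fin g) ℂ := A.map (Int.cast : ℤ → ℂ) with hAc
  set Pc : Matrix (Fin g ⊕ Fin g) (Fin g ⊕ Fin g) ℂ := P.map (Int.cast : ℤ → ℂ) with hPc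
  set H : Matrix (Fin g ⊕ Fin g) (Fin g ⊕ Fin g) ℂ :=
    (1 - z) • Ac + (1 - (starRingEnd ℂ) z) • Acᵀ with hHdef
  -- conjugate z times z is one
  have hzz : (starRingEnd ℂ) z * z = 1 := by
    rw [mul_comm, Complex.mul_conj]
    norm_cast
    rw [Complex.normSq_eq_norm_sq, hz, one_pow]
  -- determinant of H is nonzero
  have hzb1 : (starRingEnd ℂ) z - 1 ≠ 0 := by
    rw [sub_ne_zero]
    intro h
    apply hz1
    have := congrArg (starRingEnd ℂ) h
    simpa using this
  have hfac : H = ((starRingEnd ℂ) z - 1) • (z • Ac - Acᵀ) := by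
    rw [smul_sub, smul_smul,
      show ((starRingEnd ℂ) z - 1) * z = 1 - z from by rw [sub_mul, hzz, one_mul],
      sub_eq_add_neg, ← neg_smul, neg_sub]
  have hdet : H.det ≠ 0 := by
    rw [hfac, det_smul]
    exact mul_ne_zero (pow_ne_zero _ hzb1) hΔ
  have hev : ∀ i, hH.eigenvalues i ≠ 0 := by
    intro i hi
    apply hdet
    rw [hH.det_eq_prod_eigenvalues]
    exact Finset.prod_eq_zero (Finset.mem_univ i) (by rw [hi]; norm_num)
  -- the congruence over ℂ
  have hPcAPc : Pc * Ac * Pcᵀ =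
      Matrix.fromBlocks 0 (B.map (Int.cast : ℤ → ℂ)) (C.map (Int.cast : ℤ → ℂ))
        (D.map (Int.cast : ℤ → ℂ)) := by
    have h2 := congrArg (fun M => M.map (Int.cast : ℤ → ℂ)) hPAP
    simp only [show (Int.cast : ℤ → ℂ) = ⇑cc from rfl] at h2
    rw [Matrix.map_mul, Matrix.map_mul, Matrix.transpose_map, Matrix.fromBlocks_map] at h2
    simpa [hcc] using h2
  have hPAtP : Pc * Acᵀ * Pcᵀ = (Pc * Ac * Pcᵀ)ᵀ := by
    rw [Matrix.transpose_mul, Matrix.transpose_mul, Matrix.transpose_transpose, Matrix.mul_assoc]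
  have hblock : ∀ a b : Fin g, (Pc * H * Pcᵀ) (Sum.inl a) (Sum.inl b) = 0 := by
    intro a b
    have hPHP : Pc * H * Pcᵀ = (1 - z) • (Pc * Ac * Pcᵀ) +
        (1 - (starRingEnd ℂ) z) • (Pc * Acᵀ * Pcᵀ) := by
      rw [hHdef]
      rw [Matrix.mul_add, Matrix.add_mul, Matrix.mul_smul, Matrix.smul_mul,
        Matrix.mul_smul, Matrix.smul_mul]
    rw [hPHP, hPAtP, hPcAPc]
    simp [Matrix.fromBlocks_transpose]
  -- conjugate transpose of Pcᵀ is Pc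
  have hPcH : (Pcᵀ)ᴴ = Pc := by
    ext i j
    simp [Matrix.conjTranspose_apply, Matrix.map_apply, hPc]
  -- the isotropic subspace
  set W : Submodule ℂ (Fin g ⊕ Fin g → ℂ) :=
    LinearMap.range ((Matrix.mulVecLin Pcᵀ).comp (extLin g)) with hW
  have hPcdet : IsUnit Pcᵀ.det := by
    rw [Matrix.det_transpose, hPc]
    have := hPu.map cc
    rwa [RingHom.map_det] at this
  have hinj : Function.Injective ((Matrix.mulVecLin Pcᵀ).comp (extLin g)) := by
    apply Function.Injective.comp (g := Matrix.mulVecLin Pcᵀ)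
    · intro x y hxy
      have hxy' : Pcᵀ *ᵥ x = Pcᵀ *ᵥ y := hxy
      have h1 := congrArg (fun v => Pcᵀ⁻¹ *ᵥ v) hxy'
      simpa only [Matrix.mulVec_mulVec, Matrix.nonsing_inv_mul _ hPcdet,
        Matrix.one_mulVec] using h1
    · intro x y hxy
      funext i
      exact congrFun hxy (Sum.inl i)
  have hWrank : Module.finrank ℂ W = g := by
    rw [hW, LinearMap.finrank_range_of_inj hinj, Module.finrank_fintype_fun_eq_card,
      Fintype.card_fin]
  have hWiso : ∀ w ∈ W, star w ⬝ᵥ (H *ᵥ w) = 0 := by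
    rintro w ⟨x, rfl⟩
    show star (Pcᵀ *ᵥ Sum.elim x 0) ⬝ᵥ (H *ᵥ (Pcᵀ *ᵥ Sum.elim x 0)) = 0
    rw [Matrix.star_mulVec, hPcH, Matrix.mulVec_mulVec, Matrix.dotProduct_mulVec,
      Matrix.vecMul_vecMul, ← Matrix.mul_assoc]
    simp [Matrix.vecMul, dotProduct, Fintype.sum_sum_type, hblock]
  -- counting
  have hcard : Fintype.card (Fin g ⊕ Fin g) = g + g := by
    simp [Fintype.card_sum]
  have hpos := herm_card_le_pos hH W hWiso (Finset.univ.filter fun i => 0 < hH.eigenvalues i)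
    (fun i hi => (Finset.mem_filter.1 hi).2)
  have hneg := herm_card_le_neg hH W hWiso (Finset.univ.filter fun i => hH.eigenvalues i < 0)
    (fun i hi => (Finset.mem_filter.1 hi).2)
  rw [hWrank, hcard] at hpos hneg
  have hsum : (Finset.univ.filter fun i => 0 < hH.eigenvalues i).card +
      (Finset.univ.filter fun i => hH.eigenvalues i < 0).card = g + g := by
    have h1 := Finset.card_filter_add_card_filter_not
      (s := (Finset.univ : Finset (Fin g ⊕ Fin g))) (p := fun i => 0 < hH.eigenvalues i)
    rw [Finset.card_univ, hcard] at h1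
    have heq : (Finset.univ.filter fun i => ¬ 0 < hH.eigenvalues i) =
        Finset.univ.filter fun i => hH.eigenvalues i < 0 := by
      apply Finset.filter_congr
      intro i _
      simp only [not_lt]
      exact ⟨fun h => lt_of_le_of_ne h (hev i), le_of_lt⟩
    rw [← heq]
    exact h1
  unfold hermSig

  omega
end
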